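/- arXiv:1301.3179 — 2 statements merged into one kernel-verified Lean document; each statement's English description precedes it below -/
import Mathlib

section
/- Let T be a Markov transformation of a probability space (X, m) with Markov partition β, let S be a finite state space, and suppose each transition function f_i : X → S is constant on each element of β. If T has the Strong Distortion Property with respect to m, then the skew product T_f has the Strong Distortion Property with respect to the measure μ (with respect to the Markov partition β̃ := β × S). -/
open MeasureTheory Set Filter

/-- The skew product `T_f (x, i) = (T x, f_i x)` driving a deterministic walk. -/
def detSkew {X S : Type*} (T : X → X) (f : S → X → S) : X × S → X × S :=
  fun p => (T p.1, f p.2 p.1)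

/-- The deterministic walk `U_{i,n}(x) = π₂ (T_f^n (x, i))`. -/
def detWalk {X S : Type*} (T : X → X) (f : S → X → S) (i : S) (n : ℕ) (x : X) : S :=
  ((detSkew T f)^[n] (x, i)).2

/-- The deterministic walk is transitive on `S` if for all `i j`, a.e. point
visits `j` at some positive time when started from `i`. -/
def WalkTransitive {X S : Type*} [MeasurableSpace X] (m : Measure X)
    (T : X → X) (f : S → X → S) : Prop :=
  ∀ i j : S, m {x | ∃ n, 1 ≤ n ∧ detWalk T f i n x = j} = 1

/-- A (non-singular) Markov transformation with Markov partition `P`. -/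
structure IsMarkovMap {Y : Type*} [MeasurableSpace Y] (μ : Measure Y) (R : Y → Y)
    (P : Set (Set Y)) : Prop where
  nonsingular : ∀ A : Set Y, MeasurableSet A → μ A = 0 → μ (R ⁻¹' A) = 0
  measurableSet : ∀ a ∈ P, MeasurableSet a
  pairwiseDisjoint : P.PairwiseDisjoint id
  sUnion_eq : ⋃₀ P = Set.univ
  image_sUnion : ∀ a ∈ P, ∃ Q ⊆ P, R '' a = ⋃₀ Q
  injOn : ∀ a ∈ P, Set.InjOn R a

/-- `a` communicates with `b`: a positive measure set of points of `a` visits `b`. -/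
def Communicates {Y : Type*} [MeasurableSpace Y] (μ : Measure Y) (R : Y → Y)
    (a b : Set Y) : Prop :=
  0 < μ {x | x ∈ a ∧ ∃ n, 1 ≤ n ∧ R^[n] x ∈ b}

/-- The communication class of `a` in the partition `P`. -/
def commClass {Y : Type*} [MeasurableSpace Y] (μ : Measure Y) (R : Y → Y)
    (P : Set (Set Y)) (a : Set Y) : Set (Set Y) :=
  {b ∈ P | Communicates μ R a b ∧ Communicates μ R b a}

/-- `C` is a communication class of the partition `P`. -/
def IsCommClass {Y : Type*} [MeasurableSpace Y] (μ : Measure Y) (R : Y → Y)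
    (P : Set (Set Y)) (C : Set (Set Y)) : Prop :=
  ∃ a ∈ P, C = commClass μ R P a

/-- `C` is a closed communication class of the partition `P`. -/
def IsClosedCommClass {Y : Type*} [MeasurableSpace Y] (μ : Measure Y) (R : Y → Y)
    (P : Set (Set Y)) (C : Set (Set Y)) : Prop :=
  IsCommClass μ R P C ∧ ∀ a ∈ C, ∀ b ∈ P, Communicates μ R a b → Communicates μ R b a

/-- The product partition `β̃ = β × S`. -/
def prodPartition {X : Type*} (S : Type*) (β : Set (Set X)) : Set (Set (X × S)) :=
  {c | ∃ a ∈ β, ∃ i : S, c = a ×ˢ ({i} : Set S)}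

/-- The measure `μ = (m / #S) × counting measure` on `X × S`. -/
noncomputable def fiberMeasure {X : Type*} (S : Type*) [MeasurableSpace X]
    [MeasurableSpace S] [Fintype S] (m : Measure X) : Measure (X × S) :=
  (Fintype.card S : ENNReal)⁻¹ • m.prod Measure.count

/-- The `n`-cylinder `[w 0, …, w (n-1)] = ⋂ j, R^{-j} (w j)`. -/
def cylinder {Y : Type*} (R : Y → Y) {n : ℕ} (w : Fin n → Set Y) : Set Y :=
  ⋂ j : Fin n, (R^[(j : ℕ)]) ⁻¹' w j

/-- The Strong Distortion Property: the Radon–Nikodym derivatives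
`v'_a = d(μ ∘ R^{-n})/dμ` on images of cylinders have a.e. bounded ratio. -/
def StrongDistortion {Y : Type*} [MeasurableSpace Y] (μ : Measure Y) (R : Y → Y)
    (P : Set (Set Y)) : Prop :=
  ∃ D : ENNReal, 1 ≤ D ∧ D ≠ ⊤ ∧
    ∀ n : ℕ, 1 ≤ n → ∀ w : Fin n → Set Y, (∀ j, w j ∈ P) →
      ∀ v : Y → ENNReal, Measurable v →
        (∀ B : Set Y, MeasurableSet B →
          ∫⁻ x in (R^[n] '' cylinder R w) ∩ B, v x ∂μ = μ (cylinder R w ∩ R^[n] ⁻¹' B)) →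
        ∀ᵐ x ∂μ.restrict (R^[n] '' cylinder R w),
          ∀ᵐ y ∂μ.restrict (R^[n] '' cylinder R w), v x / v y ≤ D

/-- The Finite Images property for a Markov map. -/
def FiniteImages {Y : Type*} (R : Y → Y) (P : Set (Set Y)) : Prop :=
  {s : Set Y | ∃ a ∈ P, s = R '' a}.Finite

/-- The partition `P` is irreducible under `R`: all elements intercommunicate. -/
def IrreduciblePartition {Y : Type*} [MeasurableSpace Y] (μ : Measure Y) (R : Y → Y)
    (P : Set (Set Y)) : Prop :=
  ∀ a ∈ P, ∀ b ∈ P, Communicates μ R a b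

/-!
A cylinder of the skew product is `[a₀ × {i₀}, …, a_{n-1} × {i_{n-1}}]`. Since each `f_i` is
constant on the elements of `β`, the fibre coordinate along an orbit starting in `cylinder T a`
does not depend on the base point, so the skew cylinder is `cylinder T a × {s}` and `T_f^n`
acts on it as `(x, s) ↦ (T^n x, t)` for a fixed state `t`. Hence `μ` restricted to the image is a
constant multiple of `m` restricted to `T^n (cylinder T a)`, transported to the fibre `{t}`. The
Radon–Nikodym identity for `v` therefore becomes the base identity for `v(·, t)`, and the base
distortion bound transfers back along the embedding `x ↦ (x, t)` with the same constant `D`.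
-/

open scoped ENNReal

lemma mem_cylinder_iff {Y : Type*} {R : Y → Y} {n : ℕ} {w : Fin n → Set Y} {y : Y} :
    y ∈ cylinder R w ↔ ∀ j : Fin n, R^[j] y ∈ w j :=
  mem_iInter

section ProdSingleton

variable {α β γ δ : Type*} {φ : α × β → γ × δ} {ψ : α → γ} {C : Set α} {s : β} {t : δ}

lemma image_prod_singleton_of_forall_eq (h : ∀ x ∈ C, φ (x, s) = (ψ x, t)) :
    φ '' (C ×ˢ {s}) = (ψ '' C) ×ˢ {t} := by
  ext ⟨y, r⟩
  simp only [mem_image, mem_prod, mem_singleton_iff, Prod.exists]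
  constructor
  · rintro ⟨x, _, ⟨hx, rfl⟩, hxy⟩
    rw [h x hx, Prod.mk.injEq] at hxy
    exact ⟨⟨x, hx, hxy.1⟩, hxy.2.symm⟩
  · rintro ⟨⟨x, hx, rfl⟩, rfl⟩
    exact ⟨x, s, ⟨hx, rfl⟩, h x hx⟩

lemma prod_singleton_inter_preimage_of_forall_eq (h : ∀ x ∈ C, φ (x, s) = (ψ x, t))
    (B : Set γ) : C ×ˢ {s} ∩ φ ⁻¹' (B ×ˢ {t}) = (C ∩ ψ ⁻¹' B) ×ˢ {s} := by
  ext ⟨x, r⟩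
  simp only [mem_inter_iff, mem_prod, mem_singleton_iff, mem_preimage]
  constructor
  · rintro ⟨⟨hx, rfl⟩, hφ⟩
    rw [h x hx] at hφ
    exact ⟨⟨hx, hφ.1⟩, rfl⟩
  · rintro ⟨⟨hx, hB⟩, rfl⟩
    rw [h x hx]
    exact ⟨⟨hx, rfl⟩, hB, rfl⟩

end ProdSingleton

section FiberMeasure

variable {X S : Type*} [MeasurableSpace X] [MeasurableSpace S] [MeasurableSingletonClass S]
  [Fintype S] (m : Measure X) (A : Set X) (s : S)

lemma prod_count_restrict_prod_singleton :
    (m.prod Measure.count).restrict (A ×ˢ {s}) = (m.restrict A).map (·, s) := by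
  ext B hB
  rw [Measure.restrict_apply hB, Measure.map_apply measurable_prodMk_right hB,
    Measure.restrict_apply (measurable_prodMk_right hB)]
  have hslice : B ∩ A ×ˢ {s} = ((·, s) ⁻¹' B ∩ A) ×ˢ {s} := by
    ext ⟨x, r⟩
    simp only [mem_inter_iff, mem_prod, mem_singleton_iff, mem_preimage]
    constructor
    · rintro ⟨hB, hA, rfl⟩
      exact ⟨⟨hB, hA⟩, rfl⟩
    · rintro ⟨⟨hB, hA⟩, rfl⟩
      exact ⟨hB, hA, rfl⟩
  rw [hslice, Measure.prod_prod, Measure.count_singleton, mul_one]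

lemma fiberMeasure_restrict_prod_singleton :
    (fiberMeasure S m).restrict (A ×ˢ {s}) =
      (Fintype.card S : ℝ≥0∞)⁻¹ • (m.restrict A).map (·, s) := by
  rw [fiberMeasure, Measure.restrict_smul, prod_count_restrict_prod_singleton]

lemma fiberMeasure_prod_singleton :
    fiberMeasure S m (A ×ˢ {s}) = (Fintype.card S : ℝ≥0∞)⁻¹ * m A := by
  rw [fiberMeasure, Measure.smul_apply, smul_eq_mul, Measure.prod_prod, Measure.count_singleton,
    mul_one]

lemma lintegral_fiberMeasure_prod_singleton (v : X × S → ℝ≥0∞) :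
    ∫⁻ q in A ×ˢ {s}, v q ∂fiberMeasure S m =
      (Fintype.card S : ℝ≥0∞)⁻¹ * ∫⁻ x in A, v (x, s) ∂m := by
  rw [fiberMeasure_restrict_prod_singleton, lintegral_smul_measure, smul_eq_mul,
    (measurableEmbedding_prod_mk_right s).lintegral_map]

lemma ae_fiberMeasure_restrict_prod_singleton_iff {p : X × S → Prop} :
    (∀ᵐ q ∂(fiberMeasure S m).restrict (A ×ˢ {s}), p q) ↔ ∀ᵐ x ∂m.restrict A, p (x, s) := by
  rw [fiberMeasure_restrict_prod_singleton,
    Measure.ae_ennreal_smul_measure_iff (ENNReal.inv_ne_zero.2 (ENNReal.natCast_ne_top _)),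
    (measurableEmbedding_prod_mk_right s).ae_map_iff]

end FiberMeasure

section DetSkew

variable {X S : Type*} (T : X → X) (f : S → X → S)

lemma detSkew_iterate_fst (p : X × S) (k : ℕ) : ((detSkew T f)^[k] p).1 = T^[k] p.1 := by
  induction k with
  | zero => rfl
  | succ k ih => rw [Function.iterate_succ_apply', Function.iterate_succ_apply', ← ih]; rfl

variable {T f} {n : ℕ} {a : Fin n → Set X}

lemma detSkew_iterate_of_mem_cylinder
    (hconst : ∀ j i, ∀ x ∈ a j, ∀ y ∈ a j, f i x = f i y) {x y : X}
    (hx : x ∈ cylinder T a) (hy : y ∈ cylinder T a) (s : S) :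
    ∀ k ≤ n, (detSkew T f)^[k] (x, s) = (T^[k] x, ((detSkew T f)^[k] (y, s)).2) := by
  intro k
  induction k with
  | zero => intro; rfl
  | succ k ih =>
    intro hk
    have hfk := hconst ⟨k, hk⟩ ((detSkew T f)^[k] (y, s)).2 _ (mem_cylinder_iff.1 hx ⟨k, hk⟩)
      _ (mem_cylinder_iff.1 hy ⟨k, hk⟩)
    rw [Function.iterate_succ_apply', Function.iterate_succ_apply', ih (k.le_succ.trans hk),
      Function.iterate_succ_apply']
    simp only [detSkew, detSkew_iterate_fst] at hfk ⊢
    rw [hfk]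

lemma cylinder_detSkew_prod_singleton (hn : 0 < n)
    (hconst : ∀ j i, ∀ x ∈ a j, ∀ y ∈ a j, f i x = f i y) {i : Fin n → S} {p : X × S}
    (hp : p ∈ cylinder (detSkew T f) fun j => a j ×ˢ {i j}) :
    cylinder (detSkew T f) (fun j => a j ×ˢ {i j}) = cylinder T a ×ˢ {p.2} := by
  have mem_base : ∀ q ∈ cylinder (detSkew T f) (fun j => a j ×ˢ {i j}), q.1 ∈ cylinder T a :=
    fun q hq => mem_cylinder_iff.2 fun j =>
      detSkew_iterate_fst T f q j ▸ (mem_cylinder_iff.1 hq j).1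
  have start_eq : ∀ q ∈ cylinder (detSkew T f) (fun j => a j ×ˢ {i j}), q.2 = i ⟨0, hn⟩ :=
    fun q hq => (mem_cylinder_iff.1 hq ⟨0, hn⟩).2
  ext ⟨x, r⟩
  refine ⟨fun hq => ⟨mem_base _ hq, (start_eq _ hq).trans (start_eq p hp).symm⟩, ?_⟩
  rintro ⟨hx, rfl : r = p.2⟩
  refine mem_cylinder_iff.2 fun j => ?_
  rw [detSkew_iterate_of_mem_cylinder hconst hx (mem_base p hp) p.2 j j.2.le]
  exact ⟨mem_cylinder_iff.1 hx j, (mem_cylinder_iff.1 hp j).2⟩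

end DetSkew

theorem stmt_7_general {X S : Type*} [MeasurableSpace X] [MeasurableSpace S]
    [MeasurableSingletonClass S] [Fintype S]
    (m : Measure X)
    (T : X → X) (β : Set (Set X))
    (f : S → X → S)
    (hconst : ∀ i : S, ∀ a ∈ β, ∀ x ∈ a, ∀ y ∈ a, f i x = f i y)
    (hSD : StrongDistortion m T β) :
    StrongDistortion (fiberMeasure S m) (detSkew T f) (prodPartition S β) := by
  obtain ⟨D, hD1, hDtop, hbase⟩ := hSD
  refine ⟨D, hD1, hDtop, fun n hn w hw v hv hRN => ?_⟩
  rcases (cylinder (detSkew T f) w).eq_empty_or_nonempty with hempty | ⟨p, hp⟩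
  · simp [hempty]
  choose a ha i hwi using hw
  obtain rfl : w = fun j => a j ×ˢ {i j} := funext hwi
  have hconst_word : ∀ j i, ∀ x ∈ a j, ∀ y ∈ a j, f i x = f i y := fun j i => hconst i _ (ha j)
  have hcyl := cylinder_detSkew_prod_singleton hn hconst_word hp
  have hp₁ : p.1 ∈ cylinder T a := (hcyl ▸ hp).1
  set t := ((detSkew T f)^[n] p).2
  have hstep : ∀ x ∈ cylinder T a, (detSkew T f)^[n] (x, p.2) = (T^[n] x, t) :=
    fun x hx => detSkew_iterate_of_mem_cylinder hconst_word hx hp₁ p.2 n le_rfl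
  have : Nonempty S := ⟨p.2⟩
  have hcard : (Fintype.card S : ℝ≥0∞)⁻¹ ≠ ⊤ :=
    ENNReal.inv_ne_top.2 (Nat.cast_ne_zero.2 Fintype.card_ne_zero)
  have hRNbase : ∀ B, MeasurableSet B → ∫⁻ x in T^[n] '' cylinder T a ∩ B, v (x, t) ∂m =
      m (cylinder T a ∩ T^[n] ⁻¹' B) := fun B hB => by
    have := hRN (B ×ˢ {t}) (hB.prod (measurableSet_singleton t))
    rwa [hcyl, image_prod_singleton_of_forall_eq hstep, prod_inter_prod, inter_self,
      prod_singleton_inter_preimage_of_forall_eq hstep, lintegral_fiberMeasure_prod_singleton,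
      fiberMeasure_prod_singleton,
      ENNReal.mul_right_inj (ENNReal.inv_ne_zero.2 (ENNReal.natCast_ne_top _)) hcard] at this
  rw [hcyl, image_prod_singleton_of_forall_eq hstep]
  simp only [ae_fiberMeasure_restrict_prod_singleton_iff]
  exact hbase n hn a ha _ (hv.comp measurable_prodMk_right) hRNbase

/-- If the base Markov map `T` has the Strong Distortion Property, then
the skew product `T_f` has the Strong Distortion Property with respect to `μ`. -/
theorem stmt_7 {X S : Type*} [MeasurableSpace X] [MeasurableSpace S]
    [MeasurableSingletonClass S] [Fintype S]
    (m : Measure X) [IsProbabilityMeasure m]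
    (T : X → X) (β : Set (Set X)) (hMarkov : IsMarkovMap m T β)
    (f : S → X → S)
    (hconst : ∀ i : S, ∀ a ∈ β, ∀ x ∈ a, ∀ y ∈ a, f i x = f i y)
    (hSD : StrongDistortion m T β) :
    StrongDistortion (fiberMeasure S m) (detSkew T f) (prodPartition S β) :=
  stmt_7_general m T β f hconst hSD
end

section
/- Consider the deterministic walk on S = {0, 1, 2} driven by the doubling map T : [0,1] → [0,1], Tx := 2x mod 1 (with Lebesgue measure), with transition functions f_0(x) = 0 for x ∈ [3/4, 1), 1 for x ∈ [1/4, 3/4), 2 for x ∈ [0, 1/4); f_1(x) = 0 for x ∈ [1/4, 1/2), 1 for x ∈ [0, 1/4) ∪ [3/4, 1], 2 for x ∈ [1/2, 3/4); f_2(x) = 0 for x ∈ [0, 1/4) ∪ [1/2, 3/4), 2 for x ∈ [1/4, 1/2) ∪ [3/4, 1]. Then for Lebesgue-almost every x ∈ [0, 1/2), the walk started at state 0 visits all three states 0, 1, 2 infinitely often: for each j ∈ S there are infinitely many n with U_{0,n}(x) = j. -/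
open MeasureTheory Set Filter

/-- The doubling map `T x = 2 x mod 1` on `[0, 1]`. -/
noncomputable def doubling : ℝ → ℝ := fun x => Int.fract (2 * x)

open scoped Classical in
/-- The environment `f_0, f_1, f_2` of the counter-example. -/
noncomputable def exEnv : Fin 3 → ℝ → Fin 3 := fun i x =>
  if i = 0 then
    (if 3/4 ≤ x ∧ x < 1 then 0
     else if 1/4 ≤ x ∧ x < 3/4 then 1
     else 2)
  else if i = 1 then
    (if 1/4 ≤ x ∧ x < 1/2 then 0
     else if (0 ≤ x ∧ x < 1/4) ∨ (3/4 ≤ x ∧ x ≤ 1) then 1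
     else 2)
  else
    (if (0 ≤ x ∧ x < 1/4) ∨ (1/2 ≤ x ∧ x < 3/4) then 0
     else 2)

/-!
Starting from `(x, 0)` with `x < 1/2`, the skew product stays in the region where the state is
`2`, or `0` over `[0, 1/2)`, or `1` over `[1/2, 1)`, since this region is forward invariant.
From a point of that region lying over `[5/16, 3/8)` the next three steps of the walk pass
through all three states. The doubling map is `2 •` on the circle, which is ergodic, so almost
every orbit enters `[5/16, 3/8)` infinitely often.
-/

theorem Ergodic.ae_frequently_iterate_mem {α : Type*} [MeasurableSpace α] {μ : Measure α}
    [IsFiniteMeasure μ] {f : α → α} (hf : Ergodic f μ) {s : Set α} (hs : MeasurableSet s)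
    (hs₀ : μ s ≠ 0) : ∀ᵐ x ∂μ, ∃ᶠ n in atTop, f^[n] x ∈ s := by
  -- `E` is sub-invariant and contains `s`, so it has full measure; Poincaré recurrence
  -- then turns one visit to `s` into infinitely many.
  set E := ⋃ n, f^[n] ⁻¹' s
  have hE : MeasurableSet E :=
    .iUnion fun n => hf.toMeasurePreserving.measurable.iterate n hs
  have hfE : f ⁻¹' E ⊆ E := by
    simp only [E, preimage_iUnion, ← preimage_comp, ← Function.iterate_succ]
    exact iUnion_subset fun n => subset_iUnion_of_subset (n + 1) subset_rfl
  have hE_ae : E =ᵐ[μ] univ :=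
    (hf.ae_empty_or_univ_of_preimage_ae_le hE.nullMeasurableSet hfE.eventuallyLE).resolve_left
      fun h => hs₀ <| measure_mono_null (subset_iUnion_of_subset 0 subset_rfl) (ae_eq_empty.1 h)
  have hrec := hf.toMeasurePreserving.conservative.ae_forall_image_mem_imp_frequently_image_mem
    hs.nullMeasurableSet
  filter_upwards [ae_eq_univ.1 hE_ae, hrec] with x hx hrec
  obtain ⟨k, hk⟩ := mem_iUnion.1 hx
  exact hrec k hk

lemma fst_detSkew_iterate {X S : Type*} (T : X → X) (f : S → X → S) (n : ℕ) (p : X × S) :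
    ((detSkew T f)^[n] p).1 = T^[n] p.1 :=
  Function.Semiconj.iterate_right (f := Prod.fst) (fun _ => rfl) n p

lemma doubling_mem_Ico (y : ℝ) : doubling y ∈ Ico 0 1 :=
  ⟨Int.fract_nonneg _, Int.fract_lt_one _⟩

lemma doubling_of_lt_half {y : ℝ} (h₀ : 0 ≤ y) (h : y < 1 / 2) : doubling y = 2 * y :=
  Int.fract_eq_self.2 ⟨by linarith, by linarith⟩

lemma doubling_of_half_le {y : ℝ} (h : 1 / 2 ≤ y) (h₁ : y < 1) : doubling y = 2 * y - 1 :=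
  Int.fract_eq_iff.2 ⟨by linarith, by linarith, 1, by push_cast; ring⟩

lemma doubling_iterate_mem_Ico {x : ℝ} (hx : x ∈ Ico 0 1) : ∀ n, doubling^[n] x ∈ Ico 0 1
  | 0 => hx
  | n + 1 => by rw [Function.iterate_succ_apply']; exact doubling_mem_Ico _

lemma coe_doubling (y : ℝ) : (doubling y : AddCircle (1 : ℝ)) = 2 • (y : AddCircle (1 : ℝ)) := by
  rw [doubling, AddCircle.coe_fract, ← AddCircle.coe_nsmul, two_nsmul, two_mul]

lemma coe_doubling_iterate (n : ℕ) (y : ℝ) :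
    (doubling^[n] y : AddCircle (1 : ℝ)) = (fun z : AddCircle (1 : ℝ) => 2 • z)^[n] y :=
  Function.Semiconj.iterate_right (f := ((↑) : ℝ → AddCircle (1 : ℝ))) coe_doubling n y

theorem ae_frequently_doubling_iterate_mem_Ico {a b : ℝ} (ha : 0 ≤ a) (hab : a < b)
    (hb : b ≤ 1) : ∀ᵐ x ∂volume.restrict (Ico 0 1), ∃ᶠ n in atTop, doubling^[n] x ∈ Ico a b := by
  set S : Set (AddCircle (1 : ℝ)) := {z | (AddCircle.equivIco 1 0 z : ℝ) ∈ Ico a b}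
  have hS : MeasurableSet S :=
    measurable_subtype_coe.comp (AddCircle.measurableEquivIco 1 0).measurable measurableSet_Ico
  have hmem : ∀ y ∈ Ico (0 : ℝ) 1, (y : AddCircle (1 : ℝ)) ∈ S ↔ y ∈ Ico a b := fun y hy => by
    change (_ : ℝ) ∈ Ico a b ↔ _
    rw [AddCircle.equivIco_coe_of_mem (by rwa [zero_add])]
  have hmk := AddCircle.measurePreserving_mk (1 : ℝ) 0
  rw [zero_add] at hmk
  have hS₀ : volume S ≠ 0 := by
    rw [← hmk.measure_preimage hS.nullMeasurableSet, Measure.restrict_apply (hmk.measurable hS)]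
    have hIoo : Ioo a b ⊆ (↑) ⁻¹' S ∩ Ioc 0 1 := fun y hy => by
      have hy01 : y ∈ Ico (0 : ℝ) 1 := ⟨by linarith [hy.1], by linarith [hy.2]⟩
      exact ⟨(hmem y hy01).2 (Ioo_subset_Ico_self hy), by linarith [hy.1], hy01.2.le⟩
    refine ne_of_gt (lt_of_lt_of_le ?_ (measure_mono hIoo))
    simpa using hab
  have hcirc := (AddCircle.ergodic_nsmul (T := 1) one_lt_two).ae_frequently_iterate_mem hS hS₀
  have hIoc := hmk.quasiMeasurePreserving.ae hcirc
  rw [← Measure.restrict_congr_set Ico_ae_eq_Ioc] at hIoc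
  filter_upwards [hIoc, ae_restrict_mem measurableSet_Ico] with x hx hx01
  exact hx.mono fun n hn =>
    (hmem _ (doubling_iterate_mem_Ico hx01 n)).1 (by rwa [coe_doubling_iterate])

def exInvariantSet : Set (ℝ × Fin 3) :=
  {p | p.1 ∈ Ico 0 1 ∧ (p.2 = 2 ∨ (p.2 = 0 ∧ p.1 < 1 / 2) ∨ (p.2 = 1 ∧ 1 / 2 ≤ p.1))}

lemma mapsTo_detSkew_exInvariantSet :
    MapsTo (detSkew doubling exEnv) exInvariantSet exInvariantSet := by
  rintro ⟨y, s⟩ ⟨⟨hy₀, hy₁⟩, hs⟩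
  refine ⟨doubling_mem_Ico y, ?_⟩
  rcases lt_or_ge y (1 / 2) with h | h
  · rw [detSkew, doubling_of_lt_half hy₀ h]
    simp only [exEnv]
    split_ifs <;> grind
  · rw [detSkew, doubling_of_half_le h hy₁]
    simp only [exEnv]
    split_ifs <;> grind

lemma exists_detSkew_iterate_snd_eq {p : ℝ × Fin 3} (hp : p ∈ exInvariantSet)
    (hp' : p.1 ∈ Ico (5 / 16) (3 / 8)) (j : Fin 3) :
    ∃ t, ((detSkew doubling exEnv)^[t] p).2 = j := by
  obtain ⟨y, s⟩ := p
  obtain ⟨-, hs⟩ := hp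
  obtain ⟨h₁, h₂⟩ : 5 / 16 ≤ y ∧ y < 3 / 8 := hp'
  have hd₁ : doubling y = 2 * y := doubling_of_lt_half (by linarith) (by linarith)
  have hd₂ : doubling (2 * y) = 4 * y - 1 := by
    rw [doubling_of_half_le (by linarith) (by linarith)]; ring
  have e₀ : exEnv 0 y = 1 := by simp only [exEnv]; split_ifs <;> grind
  have e₁ : exEnv 1 (2 * y) = 2 := by simp only [exEnv]; split_ifs <;> grind
  have e₂ : exEnv 2 y = 2 := by simp only [exEnv]; split_ifs <;> grind
  have e₃ : exEnv 2 (2 * y) = 0 := by simp only [exEnv]; split_ifs <;> grind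
  have e₄ : exEnv 0 (4 * y - 1) = 1 := by simp only [exEnv]; split_ifs <;> grind
  rcases hs with rfl | ⟨rfl, -⟩ | ⟨rfl, h⟩
  · fin_cases j
    exacts [⟨2, by simp [detSkew, hd₁, e₂, e₃]⟩, ⟨3, by simp [detSkew, hd₁, hd₂, e₂, e₃, e₄]⟩,
      ⟨0, rfl⟩]
  · fin_cases j
    exacts [⟨0, rfl⟩, ⟨1, by simp [detSkew, e₀]⟩, ⟨2, by simp [detSkew, hd₁, e₀, e₁]⟩]
  · linarith

/-- For the walk driven by the doubling map in the environment `exEnv`,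
for Lebesgue-a.e. `x ∈ [0, 1/2)`, the walk started at state `0` visits all three states
infinitely often. -/
theorem stmt_12 :
    ∀ᵐ x ∂(volume.restrict (Set.Ico (0 : ℝ) (1/2))),
      ∀ j : Fin 3, ∃ᶠ n in Filter.atTop, detWalk doubling exEnv 0 n x = j := by
  have hvisit := ae_restrict_of_ae_restrict_of_subset
    (Ico_subset_Ico_right (by norm_num : (1 / 2 : ℝ) ≤ 1))
    (ae_frequently_doubling_iterate_mem_Ico (a := 5 / 16) (b := 3 / 8) (by norm_num)
      (by norm_num) (by norm_num))
  filter_upwards [hvisit, ae_restrict_mem measurableSet_Ico] with x hx ⟨hx₀, hx₁⟩ j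
  have hinv (n : ℕ) : (detSkew doubling exEnv)^[n] (x, 0) ∈ exInvariantSet :=
    mapsTo_detSkew_exInvariantSet.iterate n ⟨⟨hx₀, by linarith⟩, Or.inr (Or.inl ⟨rfl, hx₁⟩)⟩
  refine frequently_atTop.2 fun N => ?_
  obtain ⟨n, hn, hmem⟩ := frequently_atTop.1 hx N
  rw [← fst_detSkew_iterate doubling exEnv n (x, 0)] at hmem
  obtain ⟨t, ht⟩ := exists_detSkew_iterate_snd_eq (hinv n) hmem j
  exact ⟨t + n, by omega, by rwa [detWalk, Function.iterate_add_apply]⟩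
end
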